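/- arXiv:1510.06332 — 10 statements merged into one kernel-verified Lean document; each statement's English description precedes it below -/
import Mathlib

section
/- Let A be an integral rig and a ∈ A idempotent (a·a = a). For the submonoid F = {1, a}, the relation x ∣_F y (∃w ∈ F, w·x ≤ y) holds if and only if a·x ≤ a·y. Hence x ≡_F y if and only if a·x = a·y (when ≤ is a partial order). -/
/-- The canonical pre-order of a rig. -/
def rigLe {A : Type*} [CommSemiring A] (x y : A) : Prop := ∃ w, w + x = y

/-- The relation `x ∣_F y`: there is `w ∈ F` with `w·x ≤ y`. -/
def divF {A : Type*} [CommSemiring A] (F : Set A) (x y : A) : Prop :=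
  ∃ w ∈ F, rigLe (w * x) y

/-- For an idempotent `a` in an integral rig and `F = {1, a}`,
`x ∣_F y ↔ a·x ≤ a·y`, hence `x ≡_F y ↔ a·x = a·y`. -/
theorem divF_idempotent_iff {A : Type*} [CommSemiring A]
    (hint : ∀ x : A, 1 + x = 1) (a : A) (ha : a * a = a) :
    (∀ x y : A, divF {1, a} x y ↔ rigLe (a * x) (a * y)) ∧
    (∀ x y : A, (divF {1, a} x y ∧ divF {1, a} y x) ↔ a * x = a * y) := by
  have hadd : ∀ v : A, v + v = v := by
    intro v
    have : v * (1 + 1) = v * 1 := by rw [hint 1]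
    simpa [mul_add] using this
  have key : ∀ x y : A, divF {1, a} x y ↔ rigLe (a * x) (a * y) := by
    intro x y
    constructor
    · rintro ⟨w, hw, u, hu⟩
      rcases hw with hw | hw <;> rw [hw] at hu
      · rw [one_mul] at hu
        exact ⟨a * u, by rw [← mul_add, hu]⟩
      · refine ⟨a * u, ?_⟩
        have := congrArg (a * ·) hu
        simp only [mul_add] at this ⊢
        rw [← this, ← mul_assoc, ha]
    · rintro ⟨u, hu⟩
      refine ⟨a, Or.inr rfl, u + y, ?_⟩
      have hay : a * y + y = y := by
        have := congrArg (· * y) (hint a)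
        simpa [add_mul, add_comm] using this
      calc u + y + a * x = (u + a * x) + y := by ring
        _ = a * y + y := by rw [hu]
        _ = y := hay
  refine ⟨key, fun x y => ?_⟩
  constructor
  · rintro ⟨h1, h2⟩
    obtain ⟨u, hu⟩ := (key x y).1 h1
    obtain ⟨v, hv⟩ := (key y x).1 h2
    have hq : a * y = u + v + a * y := by
      calc a * y = u + a * x := hu.symm
        _ = u + (v + a * y) := by rw [hv]
        _ = u + v + a * y := by ring
    calc a * x = v + a * y := hv.symm
      _ = v + (u + v + a * y) := by rw [← hq]
      _ = u + (v + v) + a * y := by ring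
      _ = u + v + a * y := by rw [hadd]
      _ = a * y := hq.symm
  · intro h
    exact ⟨(key x y).2 ⟨0, by rw [zero_add, h]⟩, (key y x).2 ⟨0, by rw [zero_add, h]⟩⟩
end

section
/- Let A be an integral rig and a ∈ A strongly idempotent, meaning a·x = x for every x ≤ a. Then the set ↓a = {x ∈ A : x ≤ a} with the restricted addition and multiplication, with multiplicative unit a, additive unit 0, is a rig, and the map A → ↓a sending x to a·x is a surjective rig morphism. -/
/-- For a strongly idempotent element `a` of an integral rig, the down-set
`↓a` with the restricted operations and unit `a` is a rig and `x ↦ a·x` is a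
surjective rig morphism onto it. -/
theorem below_strongly_idempotent_rig {A : Type*} [CommSemiring A]
    (hint : ∀ x : A, 1 + x = 1) (a : A)
    (hsi : ∀ x : A, rigLe x a → a * x = x) :
    -- `↓a` is closed under the operations and contains its units
    (∀ x y : A, rigLe x a → rigLe y a → rigLe (x + y) a) ∧
    (∀ x y : A, rigLe x a → rigLe y a → rigLe (x * y) a) ∧
    rigLe (0 : A) a ∧ rigLe a a ∧
    -- `a` is a multiplicative unit and `0` an additive unit on `↓a`
    (∀ x : A, rigLe x a → a * x = x) ∧
    (∀ x : A, rigLe x a → 0 + x = x) ∧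
    -- the map `x ↦ a·x` lands in `↓a` and is a rig morphism
    (∀ x : A, rigLe (a * x) a) ∧
    a * (1 : A) = a ∧ a * (0 : A) = 0 ∧
    (∀ x y : A, a * (x + y) = a * x + a * y) ∧
    (∀ x y : A, a * (x * y) = (a * x) * (a * y)) ∧
    -- and it is surjective onto `↓a`
    (∀ y : A, rigLe y a → ∃ x : A, a * x = y) := by
  have hle : ∀ x : A, rigLe (a * x) a := by
    intro x
    exact ⟨a, by calc a + a * x = a * (1 + x) := by ring
      _ = a := by rw [hint x, mul_one]⟩
  refine ⟨?_, ?_, ⟨a, by ring⟩, ⟨0, by ring⟩, hsi, fun x _ => by ring, hle,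
    mul_one a, mul_zero a, fun x y => by ring, ?_, fun y hy => ⟨y, hsi y hy⟩⟩
  · intro x y hx hy
    have : a * (x + y) = x + y := by rw [mul_add, hsi x hx, hsi y hy]
    exact this ▸ hle (x + y)
  · intro x y hx _
    have : a * (x * y) = x * y := by rw [← mul_assoc, hsi x hx]
    exact this ▸ hle (x * y)
  · intro x y
    have h := hsi (a * (x * y)) (hle (x * y))
    calc a * (x * y) = a * (a * (x * y)) := (h).symm
      _ = (a * x) * (a * y) := by ring
end

section
/- In an integral rig, for all x, y and all m ∈ ℕ with m ≥ 2, (x + y)^m ≤ x^m + x·y + y^m in the canonical order. -/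
/-- In an integral rig, `(x + y)^m ≤ x^m + x·y + y^m` for `m ≥ 2`. -/
theorem pow_add_le {A : Type*} [CommSemiring A]
    (hint : ∀ x : A, 1 + x = 1) (x y : A) (m : ℕ) (hm : 2 ≤ m) :
    rigLe ((x + y) ^ m) (x ^ m + x * y + y ^ m) := by
  have hid : ∀ a : A, a + a = a := by
    intro a
    have h2 : (1:A) + 1 = 1 := hint 1
    calc a + a = (1 + 1) * a := by ring
    _ = 1 * a := by rw [h2]
    _ = a := one_mul a
  have habs : ∀ a b : A, a * b + a = a := by
    intro a b
    calc a * b + a = a * (1 + b) := by ring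
    _ = a * 1 := by rw [hint]
    _ = a := mul_one a
  have hrefl : ∀ a : A, rigLe a a := fun a => ⟨0, zero_add a⟩
  have htrans : ∀ a b c : A, rigLe a b → rigLe b c → rigLe a c := by
    rintro a b c ⟨w1, h1⟩ ⟨w2, h2⟩
    exact ⟨w2 + w1, by rw [add_assoc, h1, h2]⟩
  have hadd : ∀ a b c d : A, rigLe a b → rigLe c d → rigLe (a+c) (b+d) := by
    rintro a b c d ⟨w1, h1⟩ ⟨w2, h2⟩
    exact ⟨w1 + w2, by rw [← h1, ← h2]; ring⟩
  have hmul_self : ∀ a b : A, rigLe (a * b) a := fun a b =>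
    ⟨a, by rw [add_comm]; exact habs a b⟩
  have hsup : ∀ a b c : A, rigLe a c → rigLe b c → rigLe (a + b) c := by
    rintro a b c ⟨w1, h1⟩ ⟨w2, h2⟩
    refine ⟨w1 + w2, ?_⟩
    calc w1 + w2 + (a + b) = (w1 + a) + (w2 + b) := by ring
    _ = c + c := by rw [h1, h2]
    _ = c := hid c
  have hmul : ∀ a b c : A, rigLe a b → rigLe (c * a) (c * b) := by
    rintro a b c ⟨w, h⟩
    exact ⟨c * w, by rw [← h]; ring⟩
  have heq : ∀ a b : A, a = b → rigLe a b := fun a b h => h ▸ hrefl a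
  induction m, hm using Nat.le_induction with
  | base =>
    have e : (x+y)^2 = x^2 + (x*y + x*y) + y^2 := by ring
    rw [e]
    exact hadd _ _ _ _ (hadd _ _ _ _ (hrefl _) (heq _ _ (hid (x*y)))) (hrefl _)
  | succ m hm ih =>
    have step1 : rigLe ((x+y)^(m+1)) ((x+y) * (x^m + x*y + y^m)) := by
      have h : (x+y)^(m+1) = (x+y) * (x+y)^m := by ring
      rw [h]; exact hmul _ _ _ ih
    refine htrans _ _ _ step1 ?_
    obtain ⟨k, rfl⟩ : ∃ k, m = k + 1 := ⟨m - 1, by omega⟩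
    have e : (x+y) * (x^(k+1) + x*y + y^(k+1))
        = x^(k+1+1) + ((x*y)*x + ((x*y)*(y^k) + ((x*y)*(x^k) + (x*y)*y))) + y^(k+1+1) := by
      ring
    rw [e]
    refine hadd _ _ _ _ (hadd _ _ _ _ (hrefl _) ?_) (hrefl _)
    exact hsup _ _ _ (hmul_self _ _) (hsup _ _ _ (hmul_self _ _)
      (hsup _ _ _ (hmul_self _ _) (hmul_self _ _)))
end

section
/- In an integral rig, for all x, y and all m ∈ ℕ, (x + y)^m ≤ x + y^m in the canonical order. -/
lemma pow_add_decomp {A : Type*} [CommSemiring A] (x y : A) (m : ℕ) :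
    ∃ s : A, (x + y) ^ m = x * s + y ^ m := by
  induction m with
  | zero => exact ⟨0, by ring⟩
  | succ n ih =>
    obtain ⟨s, hs⟩ := ih
    exact ⟨x * s + y ^ n + y * s, by rw [pow_succ, hs]; ring⟩

/-- In an integral rig, `(x + y)^m ≤ x + y^m` for all `m`. -/
theorem pow_add_le_left {A : Type*} [CommSemiring A]
    (hint : ∀ x : A, 1 + x = 1) (x y : A) (m : ℕ) :
    rigLe ((x + y) ^ m) (x + y ^ m) := by
  obtain ⟨s, hs⟩ := pow_add_decomp x y m
  refine ⟨x, ?_⟩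
  rw [hs, ← add_assoc]
  have : x + x * s = x := by
    calc x + x * s = x * (1 + s) := by ring
    _ = x := by rw [hint s, mul_one]
  rw [this]
end

section
/- In an integral rig, for all x, y and all m, n ∈ ℕ, (x + y)^(m·n) ≤ x^m + y^n in the canonical order. -/
/-! In an integral rig the elements absorbed by `z` (those `w` with `w + z = z`) form an ideal,
which contains `x ^ m` and `y ^ n` when `z = x ^ m + y ^ n`, since addition is idempotent.
In the binomial expansion of `(x + y) ^ (m * n)` every monomial is divisible by `x ^ m` or by
`y ^ n`, so the power lies in that ideal too. -/

theorem Ideal.add_pow_mul_mem_of_pow_mem {A : Type*} [CommSemiring A] (I : Ideal A)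
    {a b : A} {m n : ℕ} (ha : a ^ m ∈ I) (hb : b ^ n ∈ I) : (a + b) ^ (m * n) ∈ I := by
  rcases Nat.eq_zero_or_pos m with rfl | hm
  · simpa using ha
  rcases Nat.eq_zero_or_pos n with rfl | hn
  · simpa using hb
  exact I.add_pow_mem_of_pow_mem_of_le ha hb (by nlinarith)

section IntegralRig

variable {A : Type*} [CommSemiring A]

theorem add_mul_self_of_integral (hint : ∀ x : A, 1 + x = 1) (z r : A) : z + r * z = z := by
  calc z + r * z = (1 + r) * z := by ring
    _ = z := by rw [hint, one_mul]

theorem add_self_of_integral (hint : ∀ x : A, 1 + x = 1) (a : A) : a + a = a :=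
  calc a + a = a + 1 * a := by rw [one_mul]
    _ = a := add_mul_self_of_integral hint a 1

variable (hint : ∀ x : A, 1 + x = 1)

def absorbIdeal (z : A) : Ideal A where
  carrier := {w | w + z = z}
  zero_mem' := zero_add z
  add_mem' {a b} (ha : a + z = z) (hb : b + z = z) := show a + b + z = z by
    rw [add_assoc, hb, ha]
  smul_mem' r w (hw : w + z = z) := show r * w + z = z by
    calc r * w + z = r * w + (z + r * z) := by rw [add_mul_self_of_integral hint]
      _ = z + r * (w + z) := by ring
      _ = z + r * z := by rw [hw]
      _ = z := add_mul_self_of_integral hint z r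

theorem mem_absorbIdeal {w z : A} : w ∈ absorbIdeal hint z ↔ w + z = z := Iff.rfl

theorem left_mem_absorbIdeal_add (a b : A) : a ∈ absorbIdeal hint (a + b) := by
  rw [mem_absorbIdeal, ← add_assoc, add_self_of_integral hint]

theorem right_mem_absorbIdeal_add (a b : A) : b ∈ absorbIdeal hint (a + b) := by
  rw [mem_absorbIdeal, add_comm a, ← add_assoc, add_self_of_integral hint]

end IntegralRig

/-- In an integral rig, `(x + y)^(m·n) ≤ x^m + y^n`. -/
theorem pow_mul_add_le {A : Type*} [CommSemiring A]
    (hint : ∀ x : A, 1 + x = 1) (x y : A) (m n : ℕ) :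
    rigLe ((x + y) ^ (m * n)) (x ^ m + y ^ n) := by
  have hmem : (x + y) ^ (m * n) ∈ absorbIdeal hint (x ^ m + y ^ n) :=
    Ideal.add_pow_mul_mem_of_pow_mem _ (left_mem_absorbIdeal_add hint _ _)
      (right_mem_absorbIdeal_add hint _ _)
  exact ⟨x ^ m + y ^ n, by rw [add_comm]; exact hmem⟩
end

section
/- Let A be an integral rig with the congruence ∼ defined by x ∼ y iff ∃m, x^m ≤ y and ∃n, y^n ≤ x. Then the quotient A/∼ is a rig satisfying z² = z and 1 + z = 1 for all z, i.e., it is a bounded distributive lattice (with · as meet and + as join). -/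
/-- `x ⪯ y` iff some power of `x` is below `y`. -/
def preceq {A : Type*} [CommSemiring A] (x y : A) : Prop := ∃ m : ℕ, rigLe (x ^ m) y

/-- `x ∼ y` iff `x ⪯ y` and `y ⪯ x`. -/
def simRel {A : Type*} [CommSemiring A] (x y : A) : Prop := preceq x y ∧ preceq y x

section Aux

variable {A : Type*} [CommSemiring A]

private lemma rig_idem (hint : ∀ x : A, 1 + x = 1) (x : A) : x + x = x := by
  calc x + x = (1 + 1) * x := by ring
  _ = 1 * x := by rw [hint 1]
  _ = x := one_mul x

private lemma rigLe_iff (hint : ∀ x : A, 1 + x = 1) (x y : A) :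
    rigLe x y ↔ x + y = y := by
  constructor
  · rintro ⟨w, rfl⟩
    calc x + (w + x) = w + (x + x) := by ring
    _ = w + x := by rw [rig_idem hint]
  · intro h; exact ⟨y, by rw [add_comm, h]⟩

-- `t + (t + r) = t + r`
private lemma absorb (hint : ∀ x : A, 1 + x = 1) (t r : A) : t + (t + r) = t + r := by
  rw [← add_assoc, rig_idem hint]

-- `a*b ≤ a`
private lemma mul_le_self' (hint : ∀ x : A, 1 + x = 1) (a b : A) : a * b + a = a := by
  calc a * b + a = a * (1 + b) := by ring
  _ = a := by rw [hint b, mul_one]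

-- `a*b ≤ b`
private lemma mul_le_self'' (hint : ∀ x : A, 1 + x = 1) (a b : A) : a * b + b = b := by
  rw [mul_comm]; exact mul_le_self' hint b a

-- transitivity of ≤
private lemma rle_trans (hint : ∀ x : A, 1 + x = 1) {a b c : A}
    (h1 : a + b = b) (h2 : b + c = c) : a + c = c := by
  calc a + c = a + (b + c) := by rw [h2]
  _ = (a + b) + c := by ring
  _ = b + c := by rw [h1]
  _ = c := h2

-- add monotone
private lemma add_mono' {a b c d : A} (h1 : a + b = b) (h2 : c + d = d) :
    (a + c) + (b + d) = b + d := by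
  calc (a + c) + (b + d) = (a + b) + (c + d) := by ring
  _ = b + d := by rw [h1, h2]

-- mul monotone
private lemma mul_mono' (hint : ∀ x : A, 1 + x = 1) {a b c d : A}
    (h1 : a + b = b) (h2 : c + d = d) : a * c + b * d = b * d := by
  rw [← h1, ← h2]
  calc a * c + (a + b) * (c + d) = a * c + (a * c + (a * d + b * c + b * d)) := by ring
  _ = a * c + (a * d + b * c + b * d) := absorb hint _ _
  _ = (a + b) * (c + d) := by ring

-- pow monotone
private lemma pow_mono' (hint : ∀ x : A, 1 + x = 1) {a b : A}
    (h : a + b = b) (n : ℕ) : a ^ n + b ^ n = b ^ n := by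
  induction n with
  | zero => simpa using hint 1
  | succ n ih =>
      have := mul_mono' hint h ih
      simpa [pow_succ, mul_comm] using this

-- sum bound
private lemma sum_le' (hint : ∀ x : A, 1 + x = 1) {ι : Type*} {s : Finset ι}
    {f : ι → A} {c : A} (h : ∀ i ∈ s, f i + c = c) :
    (∑ i ∈ s, f i) + c = c := by
  classical
  induction s using Finset.induction_on with
  | empty => simp
  | @insert a s ha ih =>
      rw [Finset.sum_insert ha, add_assoc,
        ih (fun i hi => h i (Finset.mem_insert_of_mem hi)),
        h a (Finset.mem_insert_self a s)]

-- key binomial bound : (u+x)^(m+n) ≤ u^m + x^n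
private lemma pow_add_le_s12 (hint : ∀ x : A, 1 + x = 1) (u x : A) (m n : ℕ) :
    (u + x) ^ (m + n) + (u ^ m + x ^ n) = u ^ m + x ^ n := by
  rw [add_pow]
  apply sum_le' hint
  intro k hk
  rw [Finset.mem_range] at hk
  by_cases hkm : m ≤ k
  · -- term = u^m * rest ≤ u^m ≤ u^m + x^n
    have hterm : u ^ k * x ^ (m + n - k) * (↑((m + n).choose k)) =
        u ^ m * (u ^ (k - m) * x ^ (m + n - k) * (↑((m + n).choose k))) := by
      rw [← mul_assoc, ← mul_assoc, ← pow_add, Nat.add_sub_cancel' hkm]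
    rw [hterm]
    have h1 : u ^ m * (u ^ (k - m) * x ^ (m + n - k) * (↑((m + n).choose k))) + u ^ m
        = u ^ m := mul_le_self' hint _ _
    calc u ^ m * (u ^ (k - m) * x ^ (m + n - k) * (↑((m + n).choose k))) + (u ^ m + x ^ n)
        = (u ^ m * (u ^ (k - m) * x ^ (m + n - k) * (↑((m + n).choose k))) + u ^ m) + x ^ n := by
          ring
    _ = u ^ m + x ^ n := by rw [h1]
  · -- k < m so m+n-k ≥ n ; term = x^n * rest ≤ x^n
    push_neg at hkm
    have hn : n ≤ m + n - k := by omega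
    obtain ⟨j, hj⟩ : ∃ j, m + n - k = n + j := ⟨m + n - k - n, by omega⟩
    have hterm : u ^ k * x ^ (m + n - k) * (↑((m + n).choose k)) =
        x ^ n * (u ^ k * x ^ j * (↑((m + n).choose k))) := by
      rw [hj, pow_add]; ring
    rw [hterm]
    have h1 : x ^ n * (u ^ k * x ^ j * (↑((m + n).choose k))) + x ^ n
        = x ^ n := mul_le_self' hint _ _
    calc x ^ n * (u ^ k * x ^ j * (↑((m + n).choose k))) + (u ^ m + x ^ n)
        = u ^ m + (x ^ n * (u ^ k * x ^ j * (↑((m + n).choose k))) + x ^ n) := by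
          ring
    _ = u ^ m + x ^ n := by rw [h1]

private lemma preceq_iff (hint : ∀ x : A, 1 + x = 1) (x y : A) :
    preceq x y ↔ ∃ m : ℕ, x ^ m + y = y := by
  unfold preceq
  simp only [rigLe_iff hint]

end Aux

/-- In the quotient of an integral rig by `∼`, every element satisfies
`z² = z` and `1 + z = 1`: the quotient is a bounded distributive lattice.
At the level of representatives: `∼` is a congruence, `x·x ∼ x` and
`1 + x ∼ 1` for every `x`. -/
theorem quotient_is_distributive_lattice {A : Type*} [CommSemiring A]
    (hint : ∀ x : A, 1 + x = 1) :
    (∀ x : A, simRel x x) ∧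
    (∀ x y : A, simRel x y → simRel y x) ∧
    (∀ x y z : A, simRel x y → simRel y z → simRel x z) ∧
    (∀ u v x y : A, simRel u v → simRel x y → simRel (u + x) (v + y)) ∧
    (∀ u v x y : A, simRel u v → simRel x y → simRel (u * x) (v * y)) ∧
    (∀ x : A, simRel (x * x) x) ∧
    (∀ x : A, simRel (1 + x) 1) := by
  simp only [simRel, preceq_iff hint]
  have prec_refl : ∀ x : A, ∃ m : ℕ, x ^ m + x = x := fun x =>
    ⟨1, by rw [pow_one, rig_idem hint]⟩
  have prec_trans : ∀ x y z : A, (∃ m : ℕ, x ^ m + y = y) → (∃ m : ℕ, y ^ m + z = z) →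
      (∃ m : ℕ, x ^ m + z = z) := by
    rintro x y z ⟨a, ha⟩ ⟨b, hb⟩
    refine ⟨a * b, ?_⟩
    rw [pow_mul]
    exact rle_trans hint (pow_mono' hint ha b) hb
  have prec_add : ∀ u v x y : A, (∃ m : ℕ, u ^ m + v = v) → (∃ m : ℕ, x ^ m + y = y) →
      (∃ m : ℕ, (u + x) ^ m + (v + y) = v + y) := by
    rintro u v x y ⟨a, ha⟩ ⟨b, hb⟩
    refine ⟨a + b, ?_⟩
    exact rle_trans hint (pow_add_le_s12 hint u x a b) (add_mono' ha hb)
  have prec_mul : ∀ u v x y : A, (∃ m : ℕ, u ^ m + v = v) → (∃ m : ℕ, x ^ m + y = y) →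
      (∃ m : ℕ, (u * x) ^ m + v * y = v * y) := by
    rintro u v x y ⟨a, ha⟩ ⟨b, hb⟩
    refine ⟨a + b, ?_⟩
    have h1 : (u * x) ^ (a + b) + u ^ a * x ^ b = u ^ a * x ^ b := by
      have h2 : (u * x) ^ (a + b) = (u ^ a * x ^ b) * (u ^ b * x ^ a) := by
        rw [mul_pow, pow_add, pow_add]; ring
      rw [h2]
      exact mul_le_self' hint _ _
    exact rle_trans hint h1 (mul_mono' hint ha hb)
  refine ⟨fun x => ⟨prec_refl x, prec_refl x⟩,
    fun x y h => ⟨h.2, h.1⟩,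
    fun x y z h1 h2 => ⟨prec_trans x y z h1.1 h2.1, prec_trans z y x h2.2 h1.2⟩,
    fun u v x y h1 h2 => ⟨prec_add u v x y h1.1 h2.1, prec_add v u y x h1.2 h2.2⟩,
    fun u v x y h1 h2 => ⟨prec_mul u v x y h1.1 h2.1, prec_mul v u y x h1.2 h2.2⟩,
    fun x => ⟨⟨1, by rw [pow_one]; exact mul_le_self' hint x x⟩,
      ⟨2, by rw [pow_two, rig_idem hint]⟩⟩,
    fun x => ?_⟩
  rw [hint x]
  exact ⟨prec_refl 1, prec_refl 1⟩
end

section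
/- Let A be an integral rig, D a bounded distributive lattice regarded as a rig, and f : A → D a rig morphism. If x ⪯ y in A (i.e., x^m ≤ y for some m ∈ ℕ) then f x ≤ f y in D. Hence f factors uniquely through the quotient map η : A → A/∼. -/
lemma pow_idem {D : Type*} [CommSemiring D] (hD1 : ∀ d : D, d * d = d)
    (d : D) (m : ℕ) (hm : 1 ≤ m) : d ^ m = d := by
  induction m with
  | zero => omega
  | succ n ih =>
    rcases Nat.eq_or_lt_of_le hm with h | h
    · simp [← h]
    · have hn : 1 ≤ n := by omega
      rw [pow_succ, ih hn, hD1]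

/-- A rig morphism from an integral rig to a bounded distributive lattice
(a rig with idempotent multiplication satisfying `1 + d = 1`) is monotone for
`⪯`, hence respects the congruence `∼` and factors through the reticulation. -/
theorem morphism_to_lattice_factors {A D : Type*} [CommSemiring A] [CommSemiring D]
    (hintA : ∀ x : A, 1 + x = 1)
    (hD1 : ∀ d : D, d * d = d) (hD2 : ∀ d : D, 1 + d = 1)
    (f : A →+* D) :
    (∀ x y : A, preceq x y → rigLe (f x) (f y)) ∧
    (∀ x y : A, preceq x y → preceq y x → f x = f y) := by
  have key : ∀ x y : A, preceq x y → rigLe (f x) (f y) := by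
    rintro x y ⟨m, w, hw⟩
    have hf : f w + (f x) ^ m = f y := by
      have := congrArg f hw
      simpa [map_add, map_pow] using this
    rcases Nat.eq_zero_or_pos m with hm | hm
    · have hy : f y = 1 := by
        rw [← hf, hm, pow_zero, add_comm, hD2]
      exact ⟨1, by rw [hy, hD2]⟩
    · rw [pow_idem hD1 (f x) m hm] at hf
      exact ⟨f w, hf⟩
  refine ⟨key, fun x y hxy hyx => ?_⟩
  obtain ⟨w, hw⟩ := key x y hxy
  obtain ⟨v, hv⟩ := key y x hyx
  have idem : ∀ d : D, d + d = d := by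
    intro d
    have : (1 + 1 : D) * d = d := by rw [hD2, one_mul]
    simpa [add_mul] using this
  have h1 : f x + f y = f y := by
    rw [← hw, ← add_assoc, add_comm (f x) w, add_assoc, idem]
  have h2 : f y + f x = f x := by
    rw [← hv, ← add_assoc, add_comm (f y) v, add_assoc, idem]
  rw [← h1, add_comm, h2]
end

section
/- Let A be an integral rig, a ∈ A, and F = {a^n : n ∈ ℕ}. Then the localization A[a⁻¹] = A/≡_F is trivial (0 = 1) if and only if a is nilpotent (a^n ≤ 0, equivalently a^n = 0, for some n). -/
/-- In an integral rig, the localization `A[a⁻¹]` is trivial (i.e. `1 ≡_F 0` for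
`F` the powers of `a`) iff `a` is nilpotent. -/
theorem localization_trivial_iff_nilpotent {A : Type*} [CommSemiring A]
    (hint : ∀ x : A, 1 + x = 1) (a : A) :
    ((∃ n : ℕ, rigLe (a ^ n * 1) 0) ∧ (∃ n : ℕ, rigLe (a ^ n * 0) 1)) ↔
      (∃ n : ℕ, a ^ n = 0) := by
  have idem : ∀ x : A, x + x = x := by
    intro x
    calc x + x = x * (1 + 1) := by ring
    _ = x * 1 := by rw [hint 1]
    _ = x := by ring
  constructor
  · rintro ⟨⟨n, w, hw⟩, -⟩
    refine ⟨n, ?_⟩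
    rw [mul_one] at hw
    calc a ^ n = a ^ n + 0 := by ring
    _ = a ^ n + (w + a ^ n) := by rw [hw]
    _ = w + (a ^ n + a ^ n) := by ring
    _ = w + a ^ n := by rw [idem]
    _ = 0 := hw
  · rintro ⟨n, hn⟩
    exact ⟨⟨n, 0, by simp [hn]⟩, ⟨0, 1, by simp⟩⟩
end

section
/- (Pushout-pullback lemma, pullback part) Let A be an integral rig and a, b ∈ A. If u, v ∈ A satisfy: ∃k, a^k·u ≤ v and a^k·v ≤ u, and ∃l, b^l·u ≤ v and b^l·v ≤ u, then ∃m, (a+b)^m·u ≤ v and (a+b)^m·v ≤ u. That is, if u and v become equal in both A[a⁻¹] and A[b⁻¹], they become equal in A[(a+b)⁻¹]. -/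
section Aux

variable {A : Type*} [CommSemiring A]

lemma rigLe_refl (x : A) : rigLe x x := ⟨0, zero_add x⟩

lemma rigLe_trans {x y z : A} (h1 : rigLe x y) (h2 : rigLe y z) : rigLe x z := by
  obtain ⟨w1, hw1⟩ := h1
  obtain ⟨w2, hw2⟩ := h2
  exact ⟨w2 + w1, by rw [add_assoc, hw1, hw2]⟩

lemma rigLe_mul_left {x y : A} (c : A) (h : rigLe x y) : rigLe (c * x) (c * y) := by
  obtain ⟨w, hw⟩ := h
  exact ⟨c * w, by rw [← mul_add, hw]⟩

lemma rigLe_add {x y x' y' : A} (h : rigLe x y) (h' : rigLe x' y') :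
    rigLe (x + x') (y + y') := by
  obtain ⟨w, hw⟩ := h
  obtain ⟨w', hw'⟩ := h'
  exact ⟨w + w', by rw [← hw, ← hw']; ring⟩

lemma rigLe_zero (x : A) : rigLe 0 x := ⟨x, add_zero x⟩

lemma rigLe_add_left (x y : A) : rigLe x (y + x) := ⟨y, rfl⟩

lemma rigLe_add_right (x y : A) : rigLe x (x + y) := ⟨y, add_comm y x⟩

variable (hint : ∀ x : A, 1 + x = 1)
include hint

lemma rigLe_one (x : A) : rigLe x 1 := ⟨1, hint x⟩

lemma rig_add_idem (x : A) : x + x = x := by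
  have : (1 + 1 : A) * x = 1 * x := by rw [hint 1]
  simpa [add_mul] using this

lemma rigLe_mul_self (x y : A) : rigLe (x * y) x := by
  have := rigLe_mul_left x (rigLe_one hint y)
  simpa using this

lemma rigLe_mul_self' (x y : A) : rigLe (x * y) y := by
  rw [mul_comm]; exact rigLe_mul_self hint y x

lemma rig_sum_le {ι : Type*} (s : Finset ι) (f : ι → A) (c : A)
    (h : ∀ i ∈ s, rigLe (f i) c) : rigLe (∑ i ∈ s, f i) c := by
  classical
  induction s using Finset.induction_on with
  | empty => simpa using rigLe_zero c
  | @insert i s hx ih =>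
    rw [Finset.sum_insert hx]
    have h1 : rigLe (f i + ∑ j ∈ s, f j) (c + c) :=
      rigLe_add (h i (Finset.mem_insert_self i s))
        (ih fun j hj => h j (Finset.mem_insert_of_mem hj))
    rwa [rig_add_idem hint] at h1

lemma rig_pow_add_le (a b : A) (k l : ℕ) :
    rigLe ((a + b) ^ (k + l)) (a ^ k + b ^ l) := by
  rw [add_pow]
  apply rig_sum_le hint
  intro i hi
  simp only [Finset.mem_range] at hi
  by_cases hik : k ≤ i
  · refine rigLe_trans ?_ (rigLe_add_right (a ^ k) (b ^ l))
    have : a ^ i * b ^ (k + l - i) * (k + l).choose i = a ^ k * (a ^ (i - k) * (b ^ (k + l - i) * (k + l).choose i)) := by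
      rw [← mul_assoc, ← mul_assoc, ← pow_add, Nat.add_sub_cancel' hik]
    rw [this]
    exact rigLe_mul_self hint _ _
  · refine rigLe_trans ?_ (rigLe_add_left (b ^ l) (a ^ k))
    push_neg at hik
    have hle : l ≤ k + l - i := by omega
    have : a ^ i * b ^ (k + l - i) * (k + l).choose i
        = b ^ l * (b ^ (k + l - i - l) * (a ^ i * (k + l).choose i)) := by
      rw [← mul_assoc, ← mul_assoc, ← pow_add, Nat.add_sub_cancel' hle]
      ring
    rw [this]
    exact rigLe_mul_self hint _ _

end Aux

/-- Pushout-pullback lemma, pullback (injectivity) part: if `u` and `v` become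
equal in `A[a⁻¹]` and in `A[b⁻¹]` then they become equal in `A[(a+b)⁻¹]`. -/
theorem pushout_pullback_injective {A : Type*} [CommSemiring A]
    (hint : ∀ x : A, 1 + x = 1) (a b u v : A)
    (ha : ∃ k : ℕ, rigLe (a ^ k * u) v ∧ rigLe (a ^ k * v) u)
    (hb : ∃ l : ℕ, rigLe (b ^ l * u) v ∧ rigLe (b ^ l * v) u) :
    ∃ m : ℕ, rigLe ((a + b) ^ m * u) v ∧ rigLe ((a + b) ^ m * v) u := by
  obtain ⟨k, hau, hav⟩ := ha
  obtain ⟨l, hbu, hbv⟩ := hb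
  refine ⟨k + l, ?_, ?_⟩
  · have h1 : rigLe ((a + b) ^ (k + l) * u) ((a ^ k + b ^ l) * u) := by
      have := rigLe_mul_left u (rig_pow_add_le hint a b k l)
      simpa [mul_comm] using this
    refine rigLe_trans h1 ?_
    rw [add_mul]
    have := rigLe_add hau hbu
    rwa [rig_add_idem hint] at this
  · have h1 : rigLe ((a + b) ^ (k + l) * v) ((a ^ k + b ^ l) * v) := by
      have := rigLe_mul_left v (rig_pow_add_le hint a b k l)
      simpa [mul_comm] using this
    refine rigLe_trans h1 ?_
    rw [add_mul]
    have := rigLe_add hav hbv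
    rwa [rig_add_idem hint] at this
end

section
/- (Pushout-pullback lemma, surjectivity part) Let A be an integral rig, a, b ∈ A, and x, y ∈ A with (a·b)^m·x ≤ y and (a·b)^m·y ≤ x for some m ∈ ℕ. Set z = a^m·x + b^m·y. Then a^m·z ≤ x and a^m·x ≤ z (so z and x become equal in A[a⁻¹]), and symmetrically b^m·z ≤ y and b^m·y ≤ z. -/
lemma rig_mul_le {A : Type*} [CommSemiring A] (hint : ∀ x : A, 1 + x = 1)
    (u x : A) : rigLe (u * x) x :=
  ⟨x, by have : x + u * x = (1 + u) * x := by ring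
         rw [this, hint u, one_mul]⟩

lemma rig_add_le {A : Type*} [CommSemiring A] (hint : ∀ x : A, 1 + x = 1)
    {p q x : A} (hp : rigLe p x) (hq : rigLe q x) : rigLe (p + q) x := by
  obtain ⟨w1, h1⟩ := hp
  obtain ⟨w2, h2⟩ := hq
  refine ⟨w1 + w2, ?_⟩
  have hxx : x + x = x := by
    have : x + x = (1 + 1) * x := by ring
    rw [this, hint 1, one_mul]
  calc w1 + w2 + (p + q) = (w1 + p) + (w2 + q) := by ring
    _ = x + x := by rw [h1, h2]
    _ = x := hxx

/-- Pushout-pullback lemma, surjectivity part: given compatible `x` and `y`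
over `a·b`, the element `z = a^m·x + b^m·y` restricts to `x` in `A[a⁻¹]` and to
`y` in `A[b⁻¹]`. -/
theorem pushout_pullback_surjective {A : Type*} [CommSemiring A]
    (hint : ∀ x : A, 1 + x = 1) (a b x y : A) (m : ℕ)
    (hx : rigLe ((a * b) ^ m * x) y) (hy : rigLe ((a * b) ^ m * y) x) :
    (rigLe (a ^ m * (a ^ m * x + b ^ m * y)) x ∧
      rigLe (a ^ m * x) (a ^ m * x + b ^ m * y)) ∧
    (rigLe (b ^ m * (a ^ m * x + b ^ m * y)) y ∧
      rigLe (b ^ m * y) (a ^ m * x + b ^ m * y)) := by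
  have key1 : rigLe (a ^ m * (a ^ m * x + b ^ m * y)) x := by
    have e : a ^ m * (a ^ m * x + b ^ m * y)
        = (a ^ m * a ^ m) * x + (a * b) ^ m * y := by rw [mul_pow]; ring
    rw [e]
    exact rig_add_le hint (rig_mul_le hint _ _) hy
  have key2 : rigLe (b ^ m * (a ^ m * x + b ^ m * y)) y := by
    have e : b ^ m * (a ^ m * x + b ^ m * y)
        = (b ^ m * b ^ m) * y + (a * b) ^ m * x := by rw [mul_pow]; ring
    rw [e]
    exact rig_add_le hint (rig_mul_le hint _ _) hx
  exact ⟨⟨key1, ⟨b ^ m * y, by ring⟩⟩, ⟨key2, ⟨a ^ m * x, by ring⟩⟩⟩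
end
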